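/- arXiv:math/9911174 — 2 statements merged into one kernel-verified Lean document; each statement's English description precedes it below -/
import Mathlib

section
/- In a free group, if an element u is not a proper power, then u generates its own centralizer: the centralizer of u equals the cyclic subgroup generated by u. -/
/-!
Two commuting elements `g`, `u` of a free group generate a subgroup that is free (Nielsen–Schreier)
and abelian, hence cyclic: a free group on two distinct generators `a ≠ b` is not abelian, as
mapping `a, b` to non-commuting transpositions of `S₃` shows. So `g` and `u` are powers of a common
element `w`, and if `u` is not a proper power then `u = w` or `u = w⁻¹`.
-/

/-- `u` is not a proper power. -/
def FreeGroup.Primitive {α : Type*} (u : FreeGroup α) : Prop :=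
  ∀ (v : FreeGroup α) (k : ℕ), 0 < k → u = v ^ k → k = 1

namespace FreeGroup

variable {α : Type*}

theorem not_commute_of_ne {a b : α} (hab : a ≠ b) : ¬Commute (of a) (of b) := by
  have hS₃ : Equiv.swap (0 : Fin 3) 1 * Equiv.swap 1 2 ≠ Equiv.swap 1 2 * Equiv.swap 0 1 := by
    decide
  classical
  intro h
  apply hS₃
  simpa [Function.update_of_ne hab.symm] using
    (h.map (lift (Function.update (fun _ => Equiv.swap 1 2) a (Equiv.swap 0 1)))).eq

theorem subsingleton_of_forall_commute (h : ∀ x y : FreeGroup α, Commute x y) :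
    Subsingleton α :=
  ⟨fun _ _ => by_contra fun hab => not_commute_of_ne hab (h _ _)⟩

instance isCyclic_of_subsingleton [Subsingleton α] : IsCyclic (FreeGroup α) := by
  cases isEmpty_or_nonempty α
  · infer_instance
  · have : Unique α := uniqueOfSubsingleton (Classical.arbitrary α)
    infer_instance

namespace Primitive

theorem ne_one {u : FreeGroup α} (hu : u.Primitive) : u ≠ 1 := fun h =>
  absurd (hu 1 2 two_pos (by rw [h, one_pow])) (by norm_num)

theorem eq_one_or_eq_neg_one_of_zpow_eq {u w : FreeGroup α} (hu : u.Primitive) {n : ℤ}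
    (h : w ^ n = u) : n = 1 ∨ n = -1 := by
  rcases lt_trichotomy n 0 with hn | rfl | hn
  · have := hu w⁻¹ n.natAbs (by omega) (by
      rw [← h, inv_pow, ← zpow_natCast, ← zpow_neg, Int.natCast_natAbs, abs_of_neg hn, neg_neg])
    omega
  · exact absurd (h.symm.trans (zpow_zero w)) hu.ne_one
  · have := hu w n.natAbs (by omega) (by
      rw [← h, ← zpow_natCast, Int.natCast_natAbs, abs_of_pos hn])
    omega

theorem zpowers_eq_of_mem_zpowers {u w : FreeGroup α} (hu : u.Primitive)
    (huw : u ∈ Subgroup.zpowers w) : Subgroup.zpowers u = Subgroup.zpowers w := by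
  obtain ⟨n, rfl⟩ := huw
  rcases hu.eq_one_or_eq_neg_one_of_zpow_eq rfl with rfl | rfl <;> simp

end Primitive

end FreeGroup

namespace IsFreeGroup

variable {G : Type*} [Group G] [IsFreeGroup G]

theorem isCyclic_of_forall_commute (h : ∀ x y : G, Commute x y) : IsCyclic G := by
  obtain ⟨ι, ⟨b⟩⟩ := IsFreeGroup.nonempty_basis (G := G)
  have : Subsingleton ι := FreeGroup.subsingleton_of_forall_commute fun x y => by
    simpa using (h (b.repr.symm x) (b.repr.symm y)).map b.repr
  exact isCyclic_of_surjective b.repr.symm b.repr.symm.surjective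

theorem exists_mem_zpowers_of_commute {g h : G} (hgh : Commute g h) :
    ∃ w : G, g ∈ Subgroup.zpowers w ∧ h ∈ Subgroup.zpowers w := by
  set H := Subgroup.closure {g, h}
  have hH : IsMulCommutative H := Subgroup.isMulCommutative_closure (by
    rintro x (rfl | rfl) y (rfl | rfl) <;> first | rfl | exact hgh.eq | exact hgh.eq.symm)
  obtain ⟨w, hw⟩ := (isCyclic_of_forall_commute (G := H) hH.is_comm.comm).exists_generator
  have mem_zpowers (x : G) (hx : x ∈ H) : x ∈ Subgroup.zpowers (w : G) := by
    simpa [MonoidHom.map_zpowers] using Subgroup.mem_map_of_mem H.subtype (hw ⟨x, hx⟩)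
  exact ⟨w, mem_zpowers g (Subgroup.subset_closure (by simp)),
    mem_zpowers h (Subgroup.subset_closure (by simp))⟩

end IsFreeGroup

theorem freeGroup_centralizer_eq_zpowers_general {α : Type*} (u : FreeGroup α)
    (hprim : FreeGroup.Primitive u) :
    Subgroup.centralizer {u} = Subgroup.zpowers u := by
  refine le_antisymm (fun g hg => ?_)
    (Subgroup.zpowers_le.2 (Subgroup.mem_centralizer_singleton_iff.2 rfl))
  obtain ⟨w, hgw, huw⟩ :=
    IsFreeGroup.exists_mem_zpowers_of_commute (Subgroup.mem_centralizer_singleton_iff.1 hg)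
  rwa [hprim.zpowers_eq_of_mem_zpowers huw]

/-- In a free group, an element that is not a proper power generates its own centralizer. -/
theorem freeGroup_centralizer_eq_zpowers {α : Type*} (u : FreeGroup α) (hu : u ≠ 1)
    (hprim : FreeGroup.Primitive u) :
    Subgroup.centralizer {u} = Subgroup.zpowers u :=
  freeGroup_centralizer_eq_zpowers_general u hprim
end

section
/- Let F be a free group and fix, for each conjugacy class, a cyclically reduced representative. Then the chosen representatives of two conjugacy classes are equal as group elements if and only if the classes are equal, and every cyclically reduced element is a cyclic rotation (as a word) of the chosen representative of its class. -/
/-!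
Let `R` be cyclically reduced and conjugate it by a reduced word `L y`. If `y` cancels against
the first letter of `R`, or the last letter of `R` against `y⁻¹`, then `L y R y⁻¹ L⁻¹` equals
`L R' L⁻¹` for a one-letter rotation `R'` of `R`, which is again cyclically reduced, and we
induct on `L`. Otherwise `L y R y⁻¹ L⁻¹` is already reduced; it begins with a letter and ends
with its inverse, so it is not cyclically reduced.
-/

/-- An element of a free group is cyclically reduced if the concatenation of its
reduced word with itself is still reduced. -/
def FreeGroup.IsCyclicallyReducedElt {α : Type*} [DecidableEq α] (w : FreeGroup α) : Prop :=
  FreeGroup.reduce (w.toWord ++ w.toWord) = w.toWord ++ w.toWord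

namespace FreeGroup

variable {α : Type*} {L L' M : List (α × Bool)}

theorem isReduced_append_self_iff : IsReduced (L ++ L) ↔ IsCyclicallyReduced L := by
  rw [IsReduced, List.isChain_append, ← and_assoc, and_self, isCyclicallyReduced_iff, IsReduced]

theorem IsCyclicallyReduced.rotate (h : IsCyclicallyReduced L) (n : ℕ) :
    IsCyclicallyReduced (L.rotate n) := by
  rcases eq_or_ne L [] with rfl | hL
  · simp
  have hLLL : IsReduced (L ++ L ++ L) :=
    (isReduced_append_self_iff.2 h).append_overlap (isReduced_append_self_iff.2 h) hL
  rw [← isReduced_append_self_iff, ← List.rotate_mod,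
    List.rotate_eq_drop_append_take (Nat.mod_lt _ (List.length_pos_iff.2 hL)).le]
  refine hLLL.infix ⟨L.take (n % L.length), L.drop (n % L.length), ?_⟩
  simp only [List.append_assoc, List.take_append_drop]
  simp only [← List.append_assoc, List.take_append_drop]

theorem _root_.List.IsRotated.isCyclicallyReduced (h : L ~r L') (hL : IsCyclicallyReduced L) :
    IsCyclicallyReduced L' := by
  obtain ⟨n, rfl⟩ := h
  exact hL.rotate n

theorem fst_eq_imp_snd_eq_iff {a b : α × Bool} : (a.1 = b.1 → a.2 = b.2) ↔ b ≠ (a.1, !a.2) := by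
  obtain ⟨x, s⟩ := a
  obtain ⟨y, t⟩ := b
  cases s <;> cases t <;> simp [eq_comm]

theorem not_isCyclicallyReduced_append_invRev (hL : L ≠ []) :
    ¬ IsCyclicallyReduced (L ++ M ++ invRev L) := by
  obtain ⟨⟨x, b⟩, L₀, rfl⟩ := List.exists_cons_of_ne_nil hL
  intro h
  have := h.2 (x, !b) (by rw [invRev_cons, ← List.append_assoc]; exact List.getLast?_concat ..)
    (x, b) rfl
  simp at this

theorem isReduced_cons_append_singleton {y : α × Bool} (hM : IsReduced M) (hM0 : M ≠ [])
    (hhead : M.head? ≠ some (y.1, !y.2)) (hlast : M.getLast? ≠ some y) :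
    IsReduced (y :: M ++ [(y.1, !y.2)]) := by
  obtain ⟨a, M, rfl⟩ := List.exists_cons_of_ne_nil hM0
  have hya : IsReduced ([y] ++ a :: M) := by
    refine isReduced_cons_cons.2 ⟨fst_eq_imp_snd_eq_iff.2 ?_, hM⟩
    simpa using hhead
  have hMy : IsReduced (a :: M ++ [(y.1, !y.2)]) := by
    refine List.isChain_append.2 ⟨hM, List.isChain_singleton _, fun z hz w hw => ?_⟩
    obtain rfl : w = (y.1, !y.2) := by simpa using hw.symm
    have hzy : z ≠ y := fun hzy => hlast (hzy ▸ Option.mem_def.1 hz)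
    refine fst_eq_imp_snd_eq_iff.2 ?_
    simpa [Prod.ext_iff, eq_comm] using hzy
  simpa using hya.append_overlap hMy (List.cons_ne_nil _ _)

section DecidableEq

variable [DecidableEq α]

theorem isCyclicallyReducedElt_iff (w : FreeGroup α) :
    w.IsCyclicallyReducedElt ↔ IsCyclicallyReduced w.toWord := by
  rw [IsCyclicallyReducedElt, ← isReduced_iff_reduce_eq, isReduced_append_self_iff]

theorem IsReduced.invRev (h : IsReduced L) : IsReduced (invRev L) :=
  isReduced_iff_reduce_eq.2 (by rw [reduce_invRev, h.reduce_eq])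

theorem toWord_conj (g r : FreeGroup α) :
    (g * r * g⁻¹).toWord = reduce (g.toWord ++ r.toWord ++ invRev g.toWord) := by
  rw [← toWord_mk, ← mul_mk, ← mul_mk, ← inv_mk, mk_toWord, mk_toWord]

theorem isReduced_append_append_invRev {y : α × Bool} (hL : IsReduced (L ++ [y]))
    (hM : IsReduced (y :: M ++ [(y.1, !y.2)])) :
    IsReduced (L ++ [y] ++ M ++ invRev (L ++ [y])) := by
  have hLM : IsReduced (L ++ [y] ++ M ++ [(y.1, !y.2)]) := by
    simpa using hL.append_overlap (by simpa using hM) (List.cons_ne_nil _ _)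
  have hinv : invRev (L ++ [y]) = [(y.1, !y.2)] ++ invRev L := by
    simp [invRev]
  rw [hinv, ← List.append_assoc]
  exact hLM.append_overlap (by simpa [hinv] using hL.invRev) (List.cons_ne_nil _ _)

theorem isRotated_reduce_conj {L R : List (α × Bool)} (hL : IsReduced L)
    (hR : IsCyclicallyReduced R) (hc : IsCyclicallyReduced (reduce (L ++ R ++ invRev L))) :
    R ~r reduce (L ++ R ++ invRev L) := by
  induction L using List.reverseRecOn generalizing R with
  | nil => simpa [hR.isReduced.reduce_eq] using List.IsRotated.refl R
  | append_singleton L y ih =>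
    obtain ⟨x, b⟩ := y
    have hL' : IsReduced L := hL.infix (List.prefix_append _ _).isInfix
    rcases eq_or_ne R [] with rfl | hR0
    · rw [List.append_nil, ← toWord_mk, ← mul_mk, ← inv_mk, mul_inv_cancel, toWord_one]
    by_cases hhead : R.head? = some (x, !b)
    · obtain ⟨R', rfl⟩ := List.head?_eq_some_iff.1 hhead
      have hred : reduce (L ++ [(x, b)] ++ (x, !b) :: R' ++ invRev (L ++ [(x, b)])) =
          reduce (L ++ (R' ++ [(x, !b)]) ++ invRev L) := by
        simpa [invRev_append, invRev] using
          reduce.Step.eq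
            (Red.Step.not (L₁ := L) (L₂ := R' ++ (x, !b) :: invRev L) (x := x) (b := b))
      rw [hred] at hc ⊢
      have hrot : (x, !b) :: R' ~r R' ++ [(x, !b)] := List.isRotated_append (l := [_])
      exact hrot.trans (ih hL' (hrot.isCyclicallyReduced hR) hc)
    by_cases hlast : R.getLast? = some (x, b)
    · obtain ⟨R', rfl⟩ := List.getLast?_eq_some_iff.1 hlast
      have hred : reduce (L ++ [(x, b)] ++ (R' ++ [(x, b)]) ++ invRev (L ++ [(x, b)])) =
          reduce (L ++ ((x, b) :: R') ++ invRev L) := by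
        simpa [invRev_append, invRev] using
          reduce.Step.eq
            (Red.Step.not (L₁ := L ++ (x, b) :: R') (L₂ := invRev L) (x := x) (b := b))
      rw [hred] at hc ⊢
      have hrot : R' ++ [(x, b)] ~r (x, b) :: R' := List.isRotated_append (l' := [_])
      exact hrot.trans (ih hL' (hrot.isCyclicallyReduced hR) hc)
    · have hw := isReduced_append_append_invRev hL
        (isReduced_cons_append_singleton hR.isReduced hR0 hhead hlast)
      rw [hw.reduce_eq] at hc
      exact absurd hc (not_isCyclicallyReduced_append_invRev (by simp))

theorem isRotated_toWord_of_isConj {r c : FreeGroup α} (hr : IsCyclicallyReduced r.toWord)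
    (hc : IsCyclicallyReduced c.toWord) (h : IsConj r c) : r.toWord ~r c.toWord := by
  obtain ⟨g, rfl⟩ := isConj_iff.1 h
  rw [toWord_conj] at hc ⊢
  exact isRotated_reduce_conj isReduced_toWord hr hc

end DecidableEq

end FreeGroup

/-- Given a choice of a cyclically reduced representative in each conjugacy class of a
free group: representatives of two classes agree iff the classes agree, and every
cyclically reduced element is a cyclic rotation (as a word) of the representative of
its conjugacy class. -/
theorem freeGroup_cyclicallyReduced_representatives {α : Type*} [DecidableEq α]
    (rep : ConjClasses (FreeGroup α) → FreeGroup α)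
    (hrep : ∀ c, FreeGroup.IsCyclicallyReducedElt (rep c) ∧ ConjClasses.mk (rep c) = c) :
    (∀ c₁ c₂, rep c₁ = rep c₂ ↔ c₁ = c₂) ∧
      ∀ c : FreeGroup α, FreeGroup.IsCyclicallyReducedElt c →
        ∃ k, c.toWord = (rep (ConjClasses.mk c)).toWord.rotate k := by
  refine ⟨fun c₁ c₂ => ⟨fun h => ?_, congrArg rep⟩, fun c hc => ?_⟩
  · rw [← (hrep c₁).2, ← (hrep c₂).2, h]
  obtain ⟨hrepc, hmk⟩ := hrep (ConjClasses.mk c)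
  obtain ⟨k, hk⟩ := FreeGroup.isRotated_toWord_of_isConj
    ((FreeGroup.isCyclicallyReducedElt_iff _).1 hrepc)
    ((FreeGroup.isCyclicallyReducedElt_iff _).1 hc) (ConjClasses.mk_eq_mk_iff_isConj.1 hmk)
  exact ⟨k, hk.symm⟩
end
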